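/- arXiv:1810.00616 — 2 statements merged into one kernel-verified Lean document; each statement's English description precedes it below -/
import Mathlib

section
/- Define c(m,n,k,i,j) = Σ_{l=0}^{k} (-1)^l · C(i+j-k, i-l) · C(m-l, k-l) · C(n-k+l, l). Then for parameters in the domain (with i+1 ≤ m, j+1 ≤ n, i+j+1 ≤ m+n-k), the reverse recurrence holds: (i+j-k+1)(m+n-i-j-k) · c(m,n,k,i,j) = (i+1)(m-i) · c(m,n,k,i+1,j) + (j+1)(n-j) · c(m,n,k,i,j+1). -/
open Finset

/-- Integer binomial coefficient: `C(a,b) = 0` when `b < 0` or `b > a`. -/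
def ch (a b : ℤ) : ℤ := if 0 ≤ b ∧ b ≤ a then ((a.toNat).choose b.toNat : ℤ) else 0

/-- Clebsch-Gordan sum `c_{m,n,k}(i,j)`. -/
def cg (m n k i j : ℕ) : ℤ :=
  ∑ l ∈ Finset.range (k+1),
    (-1:ℤ)^l * ch ((i:ℤ)+(j:ℤ)-(k:ℤ)) ((i:ℤ)-(l:ℤ))
      * ch ((m:ℤ)-(l:ℤ)) ((k:ℤ)-(l:ℤ)) * ch ((n:ℤ)-(k:ℤ)+(l:ℤ)) (l:ℤ)

/-- Trinomial coefficient `(a+b+c)! / (a! b! c!)`. -/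
def mult (a b c : ℕ) : ℕ := (a+b+c).factorial / (a.factorial * b.factorial * c.factorial)

/-!
The summands `F(i, j; l)` of `cg` satisfy the reverse recurrence only up to a telescoping
difference: with `A, B, C` the coefficients of the recurrence,
`A F(i,j;l) - B F(i+1,j;l) - C F(i,j+1;l) = G(l+1) - G(l)` for the explicit
certificate `G = cgCertificate`. Termwise this follows from the two absorption identities
`b C(a,b) = a C(a-1,b-1)` and `(a-b) C(a,b) = a C(a-1,b)`, which hold for all integers with the
convention `C(a,b) = 0` outside `0 ≤ b ≤ a`. Summing over `0 ≤ l ≤ k`, the right side collapses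
to `G(k+1) - G(0) = 0`: `G(0)` carries the factor `l` and `G(k+1)` the factor `C(m-k-1, -1)`.
-/

lemma ch_natCast (x y : ℕ) : ch x y = x.choose y := by
  unfold ch
  split_ifs with h
  · simp
  · simp [Nat.choose_eq_zero_of_lt (by omega : x < y)]

lemma ch_of_neg (a : ℤ) {b : ℤ} (hb : b < 0) : ch a b = 0 := if_neg (by omega)

lemma ch_of_lt {a b : ℤ} (h : a < b) : ch a b = 0 := if_neg (by omega)

lemma mul_ch (a b : ℤ) : b * ch a b = a * ch (a - 1) (b - 1) := by
  rcases lt_or_ge b 1 with hb | hb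
  · rw [ch_of_neg (a - 1) (by omega : b - 1 < 0)]
    rcases lt_or_eq_of_le (by omega : b ≤ 0) with hb | rfl
    · rw [ch_of_neg a hb]; ring
    · ring
  rcases lt_or_ge a b with hab | hab
  · rw [ch_of_lt hab, ch_of_lt (by omega : a - 1 < b - 1)]; ring
  obtain ⟨a, rfl⟩ : ∃ a' : ℕ, a = a' + 1 := ⟨(a - 1).toNat, by omega⟩
  obtain ⟨b, rfl⟩ : ∃ b' : ℕ, b = b' + 1 := ⟨(b - 1).toNat, by omega⟩
  rw [add_sub_cancel_right, add_sub_cancel_right, ch_natCast]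
  rw [show ch (a + 1) (b + 1) = (a + 1).choose (b + 1) by exact_mod_cast ch_natCast (a + 1) (b + 1)]
  have h := congrArg (Nat.cast : ℕ → ℤ) (Nat.add_one_mul_choose_eq a b)
  push_cast at h
  linear_combination -h

lemma sub_mul_ch (a b : ℤ) : (a - b) * ch a b = a * ch (a - 1) b := by
  rcases lt_or_ge b 0 with hb | hb
  · rw [ch_of_neg a hb, ch_of_neg (a - 1) hb]; ring
  rcases lt_or_ge (a - 1) b with hab | hab
  · rw [ch_of_lt hab]
    rcases lt_or_eq_of_le (by omega : a ≤ b) with hab | rfl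
    · rw [ch_of_lt hab]; ring
    · ring
  obtain ⟨a, rfl⟩ : ∃ a' : ℕ, a = a' + 1 := ⟨(a - 1).toNat, by omega⟩
  lift b to ℕ using hb
  rw [add_sub_cancel_right, ch_natCast]
  rw [show ch (a + 1) b = (a + 1).choose b by exact_mod_cast ch_natCast (a + 1) b]
  have h := congrArg (Nat.cast : ℕ → ℤ) (Nat.choose_mul_succ_eq a b)
  push_cast [Nat.cast_sub (by omega : b ≤ a + 1)] at h
  linear_combination -h

section ReverseRecurrence

variable (m n k i j : ℕ)

def cgTerm (l : ℕ) : ℤ :=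
  (-1:ℤ)^l * ch ((i:ℤ)+(j:ℤ)-(k:ℤ)) ((i:ℤ)-(l:ℤ))
    * ch ((m:ℤ)-(l:ℤ)) ((k:ℤ)-(l:ℤ)) * ch ((n:ℤ)-(k:ℤ)+(l:ℤ)) (l:ℤ)

lemma cg_eq_sum_cgTerm : cg m n k i j = ∑ l ∈ range (k + 1), cgTerm m n k i j l := rfl

def cgCertificate (l : ℕ) : ℤ :=
  (-1:ℤ)^l * l * (m + 1 - l) * ch (m - l) (k - l) * ch (n - k + l) l
    * ch (i + j - k + 1) (i + 1 - l)

lemma cgCertificate_zero : cgCertificate m n k i j 0 = 0 := by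
  simp [cgCertificate]

lemma cgCertificate_succ_self : cgCertificate m n k i j (k + 1) = 0 := by
  rw [cgCertificate, ch_of_neg _ (by push_cast; omega : (k : ℤ) - ↑(k + 1) < 0)]
  ring

lemma cgTerm_reverse_recurrence (l : ℕ) :
    ((i:ℤ)+(j:ℤ)-(k:ℤ)+1) * ((m:ℤ)+(n:ℤ)-(i:ℤ)-(j:ℤ)-(k:ℤ)) * cgTerm m n k i j l
      - ((i:ℤ)+1) * ((m:ℤ)-(i:ℤ)) * cgTerm m n k (i+1) j l
      - ((j:ℤ)+1) * ((n:ℤ)-(j:ℤ)) * cgTerm m n k i (j+1) l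
      = cgCertificate m n k i j (l + 1) - cgCertificate m n k i j l := by
  have hI := mul_ch (i + j - k + 1) (i + 1 - l)
  have hI' := sub_mul_ch (i + j - k + 1) (i - l)
  have hM := mul_ch (m - l) (k - l)
  have hN := mul_ch (n - k + l + 1) (l + 1)
  unfold cgTerm cgCertificate
  push_cast
  -- `ring_nf` rather than `ring1`, so that the arguments of `ch` are normalized too
  linear_combination (norm := ring_nf)
    (-1:ℤ)^l * ch (m - l) (k - l) * ch (n - k + l) l * (l - m + i) * hI
      + (-1:ℤ)^l * ch (m - l) (k - l) * ch (n - k + l) l * (k + j - n - l) * hI'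
      - (-1:ℤ)^l * ch (i + j - k + 1) (i - l) * ch (n - k + l + 1) (l + 1) * (l + 1) * hM
      + (-1:ℤ)^l * ch (i + j - k + 1) (i - l) * ch (m - l) (k - l) * (k - l) * hN

end ReverseRecurrence

theorem stmt_2_general (m n k i j : ℕ) :
    ((i:ℤ)+(j:ℤ)-(k:ℤ)+1) * ((m:ℤ)+(n:ℤ)-(i:ℤ)-(j:ℤ)-(k:ℤ)) * cg m n k i j
      = ((i:ℤ)+1) * ((m:ℤ)-(i:ℤ)) * cg m n k (i+1) j
        + ((j:ℤ)+1) * ((n:ℤ)-(j:ℤ)) * cg m n k i (j+1) := by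
  have telescope := sum_range_sub (cgCertificate m n k i j) (k + 1)
  simp_rw [← cgTerm_reverse_recurrence, sum_sub_distrib, ← mul_sum, ← cg_eq_sum_cgTerm,
    cgCertificate_succ_self, cgCertificate_zero, sub_zero] at telescope
  linarith

theorem stmt_2 (m n k i j : ℕ) (hkm : k ≤ m) (hkn : k ≤ n) (him : i ≤ m) (hjn : j ≤ n)
    (hk : k ≤ i + j) (hub : i + j ≤ m + n - k)
    (hi : i + 1 ≤ m) (hj : j + 1 ≤ n) (hij : i + j + 1 ≤ m + n - k) :
    ((i:ℤ)+(j:ℤ)-(k:ℤ)+1) * ((m:ℤ)+(n:ℤ)-(i:ℤ)-(j:ℤ)-(k:ℤ)) * cg m n k i j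
      = ((i:ℤ)+1) * ((m:ℤ)-(i:ℤ)) * cg m n k (i+1) j
        + ((j:ℤ)+1) * ((n:ℤ)-(j:ℤ)) * cg m n k i (j+1) :=
  stmt_2_general m n k i j
end

section
/- Define c(m,n,k,i,j) = Σ_{l=0}^{k} (-1)^l · C(i+j-k, i-l) · C(m-l, k-l) · C(n-k+l, l). Then the C13 symmetry holds: for all parameters in the domain, with i' = i+j-k and m' = m+n-2k, one has c(m', n, n-k, m'-i', j) = (-1)^{n-j} · c(m,n,k,i,j). -/
open Finset

/-!
Put `m' = m + n - 2k` and `i' = m' - (i + j - k)`. As a function of `(i, j)`, `cg m n k` satisfies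
Pascal's rule `c(i+1, j+1) = c(i+1, j) + c(i, j+1)` whenever `k < i + j + 2` (from its first
binomial factor), and so does `(-1)^(n-j) * cg m' n (n-k) i' j`, because raising `i` or `j` by one
lowers `i'` by one. So it suffices to compare the two sides on the edges `i + j = k`, `j = 0` and
`i = 0` of the trapezoid `k ≤ i + j ≤ m + n - k`. On the right these sums have a single nonzero
term. On the left the edges become `i' = m'`, `j = 0` and the top line `i' + j + (n - k) = m' + n`.
The values at `j = n` (and, by the reflection `l ↦ k - l`, at `i = m`) follow from the
inclusion–exclusion identity `∑ₗ (-1)ˡ C(i,l) C(m-l,k-l) = C(m-i,k)`; the top line is reached from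
`j = n` by running Pascal's rule downwards in `j`, since `c` vanishes above it.
-/

lemma neg_one_pow_eq_of_mod_two_eq {R : Type*} [Ring R] {a b : ℕ}
    (h : a % 2 = b % 2) : (-1 : R) ^ a = (-1) ^ b := by
  rw [neg_one_pow_eq_pow_mod_two, h, ← neg_one_pow_eq_pow_mod_two (R := R)]

section ch

variable {a b : ℤ}

lemma ch_eq_zero_of_neg (h : b < 0) : ch a b = 0 :=
  if_neg fun h' => by omega

lemma ch_eq_zero_of_lt (h : a < b) : ch a b = 0 :=
  if_neg fun h' => by omega

@[norm_cast]
lemma ch_natCast_s6 (p q : ℕ) : ch p q = p.choose q := by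
  by_cases h : q ≤ p
  · simp [ch, h]
  · rw [ch_eq_zero_of_lt (by omega), Nat.choose_eq_zero_of_lt (by omega), Nat.cast_zero]

lemma ch_zero_left (h : b ≠ 0) : ch 0 b = 0 := by
  rcases lt_or_gt_of_ne h with h | h
  exacts [ch_eq_zero_of_neg h, ch_eq_zero_of_lt h]

lemma ch_zero_right (h : 0 ≤ a) : ch a 0 = 1 := by
  simp [ch, h]

lemma ch_self (h : 0 ≤ a) : ch a a = 1 := by
  simp [ch, h]

lemma ch_add_one (h : 0 ≤ a) : ch (a + 1) b = ch a b + ch a (b - 1) := by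
  lift a to ℕ using h
  rcases lt_or_ge b 0 with hb | hb
  · simp [ch_eq_zero_of_neg, hb, show b - 1 < 0 by omega]
  lift b to ℕ using hb
  cases b with
  | zero =>
    rw [Nat.cast_zero, ch_zero_right (by positivity), ch_zero_right (by positivity),
      ch_eq_zero_of_neg (by norm_num), add_zero]
  | succ b =>
    push_cast
    rw [add_sub_cancel_right]
    exact_mod_cast (Nat.choose_succ_succ a b).trans (add_comm _ _)

lemma ch_symm (h : 0 ≤ a) : ch a b = ch a (a - b) := by
  rcases lt_or_ge b 0 with hb | hb
  · rw [ch_eq_zero_of_neg hb, ch_eq_zero_of_lt (by omega)]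
  rcases lt_or_ge a b with hab | hab
  · rw [ch_eq_zero_of_lt hab, ch_eq_zero_of_neg (by omega)]
  lift a to ℕ using h
  lift b to ℕ using hb
  rw [← Nat.cast_sub (by omega), ch_natCast_s6, ch_natCast_s6, Nat.choose_symm (by omega)]

/-- Both sides are the trinomial coefficient `(p+q+r)! / (p! q! r!)` (or vanish). -/
lemma ch_mul_ch {p q r : ℤ} (hp : 0 ≤ p) (hq : 0 ≤ q) :
    ch (p + q + r) r * ch (p + q) q = ch (p + q + r) p * ch (q + r) q := by
  rcases lt_or_ge r 0 with hr | hr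
  · rw [ch_eq_zero_of_neg hr, ch_eq_zero_of_lt (a := q + r) (by omega)]; ring
  lift p to ℕ using hp
  lift q to ℕ using hq
  lift r to ℕ using hr
  have key := Nat.choose_mul (n := p + q + r) (Nat.le_add_right p q)
  rw [Nat.add_sub_cancel_left, add_assoc, Nat.add_sub_cancel_left, ← add_assoc] at key
  norm_cast
  rw [← Nat.choose_symm_add, ← Nat.choose_symm_add (a := p), key]

end ch

section cg

variable {m n k i j : ℕ}

lemma cg_succ_succ (h : k ≤ i + j + 1) :
    cg m n k (i + 1) (j + 1) = cg m n k (i + 1) j + cg m n k i (j + 1) := by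
  simp only [cg, ← sum_add_distrib]
  refine sum_congr rfl fun l _ => ?_
  rw [show ((i + 1 : ℕ) : ℤ) + ((j + 1 : ℕ) : ℤ) - k = (i + j + 1 - k : ℤ) + 1 by push_cast; ring,
    ch_add_one (by omega)]
  push_cast
  ring_nf

lemma sum_neg_one_pow_mul_ch_mul_ch (h : i ≤ m) :
    ∑ l ∈ range (k + 1), (-1 : ℤ) ^ l * ch i l * ch (m - l) (k - l) = ch (m - i) k := by
  induction i generalizing m k with
  | zero =>
    rw [sum_eq_single 0 (fun l _ hl => by rw [Nat.cast_zero, ch_zero_left (by simpa)]; ring)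
      (by simp)]
    simp [ch_zero_right]
  | succ i ih =>
    obtain ⟨m, rfl⟩ : ∃ m', m = m' + 1 := ⟨m - 1, by omega⟩
    rcases k with _ | k
    · simp only [zero_add, range_one, sum_singleton, pow_zero, CharP.cast_eq_zero, sub_zero]
      rw [ch_zero_right (by positivity), ch_zero_right (by omega), ch_zero_right (by omega)]
      ring
    have shifted : ∑ l ∈ range (k + 1 + 1),
        (-1 : ℤ) ^ l * ch i (l - 1) * ch ((m + 1 : ℕ) - l) ((k + 1 : ℕ) - l) = -ch (m - i) k := by
      rw [sum_range_succ', ← ih (by omega), ← sum_neg_distrib]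
      simp only [Nat.cast_zero, zero_sub, ch_eq_zero_of_neg neg_one_lt_zero, mul_zero, zero_mul,
        add_zero, pow_succ]
      refine sum_congr rfl fun l _ => ?_
      push_cast
      ring_nf
    have pascal (l : ℕ) : ch ((i + 1 : ℕ) : ℤ) l = ch i l + ch i (l - 1) := by
      push_cast; exact ch_add_one (by positivity)
    simp only [pascal, mul_add, add_mul, sum_add_distrib, shifted, ih (show i ≤ m + 1 by omega)]
    rw [show ((m + 1 : ℕ) : ℤ) - i = (m - i : ℤ) + 1 by push_cast; ring, ch_add_one (by omega)]
    push_cast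
    ring_nf

lemma cg_at_j_eq_n (him : i ≤ m) (hkn : k ≤ n) :
    cg m n k i n = ch ((i : ℤ) + n - k) (n - k) * ch ((m : ℤ) - i) k := by
  have term (l : ℕ) : ch ((i : ℤ) + n - k) (i - l) * ch ((n : ℤ) - k + l) l =
      ch ((i : ℤ) + n - k) (n - k) * ch i l := by
    have := ch_mul_ch (p := (n : ℤ) - k) (q := l) (r := (i : ℤ) - l) (by omega) (by omega)
    rwa [show (n : ℤ) - k + l + (i - l) = i + n - k by ring, show (l : ℤ) + (i - l) = i by ring]
      at this
  rw [cg, ← sum_neg_one_pow_mul_ch_mul_ch him, mul_sum]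
  refine sum_congr rfl fun l _ => ?_
  linear_combination (-1) ^ l * ch ((m : ℤ) - l) ((k : ℤ) - l) * term l

lemma cg_swap (hk : k ≤ i + j) : cg m n k i j = (-1) ^ k * cg n m k j i := by
  rw [cg, cg, mul_sum, ← sum_range_reflect]
  refine sum_congr rfl fun l hl => ?_
  have hl : l ≤ k := by rw [mem_range] at hl; omega
  have hsign : (-1 : ℤ) ^ (k + 1 - 1 - l) = (-1) ^ k * (-1) ^ l := by
    rw [← pow_add]; exact neg_one_pow_eq_of_mod_two_eq (by omega)
  have hsymm : ch ((j : ℤ) + i - k) (j - l) = ch ((i : ℤ) + j - k) (i - (k - l)) := by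
    rw [ch_symm (by omega)]; congr 1 <;> ring
  rw [hsign, hsymm, show k + 1 - 1 - l = k - l by omega, Nat.cast_sub hl]
  ring_nf

lemma cg_at_i_eq_m (hkm : k ≤ m) (hjn : j ≤ n) :
    cg m n k m j = (-1) ^ k * (ch ((j : ℤ) + m - k) (m - k) * ch ((n : ℤ) - j) k) := by
  rw [cg_swap (by omega), cg_at_j_eq_n hjn hkm]

lemma cg_of_add_eq (hij : i + j = k) :
    cg m n k i j = (-1) ^ i * ch ((m : ℤ) - i) (k - i) * ch ((n : ℤ) - k + i) i := by
  have h0 : (i : ℤ) + j - k = 0 := by omega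
  rw [cg, h0, sum_eq_single i]
  · rw [sub_self, ch_zero_right le_rfl]; ring
  · intro l _ hl
    rw [ch_zero_left (by omega)]; ring
  · intro h; exact absurd (mem_range.2 (by omega)) h

lemma cg_zero_right (hki : k ≤ i) (hkm : k ≤ m) : cg m n k i 0 = (-1) ^ k * ch n k := by
  rw [cg, sum_eq_single k]
  · rw [Nat.cast_zero, add_zero, sub_self, sub_add_cancel, ch_self (by omega),
      ch_zero_right (by omega)]
    ring
  · intro l hl hlk
    rw [mem_range] at hl
    rw [ch_eq_zero_of_lt (by push_cast; omega)]; ring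
  · intro h; exact absurd (mem_range.2 (by omega)) h

lemma cg_zero_left (hkj : k ≤ j) (hkn : k ≤ n) : cg m n k 0 j = ch m k := by
  rw [cg, sum_eq_single 0]
  · simp only [pow_zero, Nat.cast_zero, zero_add, sub_zero, add_zero, one_mul]
    rw [ch_zero_right (by omega), ch_zero_right (by omega)]; ring
  · intro l _ hl
    rw [ch_eq_zero_of_neg (by push_cast; omega)]; ring
  · intro h; exact absurd (mem_range.2 (by omega)) h

end cg

section topLine

variable {m n k i j : ℕ}

lemma cg_eq_zero_of_lt (hkm : k ≤ m) (hkn : k ≤ n) (him : i ≤ m) (hjn : j ≤ n)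
    (h : m + n < i + j + k) :
    cg m n k i j = 0 := by
  obtain ⟨d, hd⟩ : ∃ d, j + d = n := ⟨n - j, by omega⟩
  induction d generalizing i j with
  | zero =>
    obtain rfl : n = j := by omega
    rw [cg_at_j_eq_n him hkn, ch_eq_zero_of_lt (a := (m : ℤ) - i) (by omega), mul_zero]
  | succ d ih =>
    obtain ⟨i, rfl⟩ : ∃ i', i = i' + 1 := ⟨i - 1, by omega⟩
    have := cg_succ_succ (m := m) (n := n) (k := k) (i := i) (j := j) (by omega)
    rw [ih (j := j + 1) him (by omega) (by omega) (by omega),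
      ih (i := i) (j := j + 1) (by omega) (by omega) (by omega) (by omega)] at this
    linarith

lemma cg_of_add_add_eq (hkm : k ≤ m) (hkn : k ≤ n) (him : i ≤ m) (hjn : j ≤ n)
    (h : i + j + k = m + n) :
    cg m n k i j = (-1) ^ (n - j) * ch ((m : ℤ) + n - 2 * k) (n - k) := by
  obtain ⟨d, hd⟩ : ∃ d, j + d = n := ⟨n - j, by omega⟩
  induction d generalizing i j with
  | zero =>
    obtain rfl : n = j := by omega
    rw [cg_at_j_eq_n him hkn, show (m : ℤ) - i = k by omega, ch_self (by omega), Nat.sub_self,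
      show (i : ℤ) + n - k = m + n - 2 * k by omega]
    ring
  | succ d ih =>
    obtain ⟨i, rfl⟩ : ∃ i', i = i' + 1 := ⟨i - 1, by omega⟩
    have := cg_succ_succ (m := m) (n := n) (k := k) (i := i) (j := j) (by omega)
    rw [cg_eq_zero_of_lt hkm hkn him (by omega) (by omega),
      ih (i := i) (j := j + 1) (by omega) (by omega) (by omega) (by omega)] at this
    rw [show n - j = n - (j + 1) + 1 by omega, pow_succ]
    linarith

end topLine

section duality

variable {m n k i j M I : ℕ}

lemma cg_dual_of_add_eq (hkm : k ≤ m) (hkn : k ≤ n) (hjn : j ≤ n) (hM : M + 2 * k = m + n)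
    (hI : I + (i + j) = M + k) (hij : i + j = k) :
    cg M n (n - k) I j = (-1) ^ (n - j) * cg m n k i j := by
  obtain rfl : M = I := by omega
  rw [cg_at_i_eq_m (by omega) hjn, cg_of_add_eq hij, Nat.cast_sub hkn]
  have hm : ch ((j : ℤ) + M - (n - k)) (M - (n - k)) = ch ((m : ℤ) - i) (k - i) := by
    rw [ch_symm (by omega)]; congr 1 <;> omega
  have hn : ch ((n : ℤ) - j) (n - k) = ch ((n : ℤ) - k + i) i := by
    rw [ch_symm (by omega)]; congr 1 <;> omega
  have hsign : (-1 : ℤ) ^ (n - k) = (-1) ^ (n - j) * (-1) ^ i := by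
    rw [← pow_add]; exact neg_one_pow_eq_of_mod_two_eq (by omega)
  rw [hm, hn, hsign]
  ring

lemma cg_dual_zero_right (hkm : k ≤ m) (hkn : k ≤ n) (him : i ≤ m) (hM : M + 2 * k = m + n)
    (hI : I + i = M + k) (hki : k ≤ i) :
    cg M n (n - k) I 0 = (-1) ^ n * cg m n k i 0 := by
  rw [cg_zero_right (by omega) (by omega), cg_zero_right hki hkm, Nat.cast_sub hkn,
    ← ch_symm (by omega)]
  have hsign : (-1 : ℤ) ^ (n - k) = (-1) ^ n * (-1) ^ k := by
    rw [← pow_add]; exact neg_one_pow_eq_of_mod_two_eq (by omega)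
  rw [hsign]
  ring

lemma cg_dual_zero_left (hkm : k ≤ m) (hkn : k ≤ n) (hjn : j ≤ n) (hM : M + 2 * k = m + n)
    (hI : I + j = M + k) (hkj : k ≤ j) :
    cg M n (n - k) I j = (-1) ^ (n - j) * cg m n k 0 j := by
  rw [cg_of_add_add_eq (by omega) (by omega) (by omega) hjn (by omega), cg_zero_left hkj hkn]
  congr 2 <;> omega

theorem cg_dual (hkm : k ≤ m) (hkn : k ≤ n) (hM : M + 2 * k = m + n) (him : i ≤ m) (hjn : j ≤ n)
    (hk : k ≤ i + j) (hI : I + (i + j) = M + k) :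
    cg M n (n - k) I j = (-1) ^ (n - j) * cg m n k i j := by
  induction i generalizing j I with
  | zero => exact cg_dual_zero_left hkm hkn hjn hM (by omega) (by omega)
  | succ i ih_i =>
    induction j generalizing I with
    | zero => simpa using cg_dual_zero_right hkm hkn him hM (by omega) (by omega)
    | succ j ih_j =>
      by_cases hbot : i + 1 + (j + 1) = k
      · exact cg_dual_of_add_eq hkm hkn hjn hM hI hbot
      have h_left := ih_j (I := I + 1) (by omega) (by omega) (by omega)
      have h_below := ih_i (j := j + 1) (I := I + 1) (by omega) hjn (by omega) (by omega)
      have pascal := cg_succ_succ (m := M) (n := n) (k := n - k) (i := I) (j := j) (by omega)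
      have hsign : (-1 : ℤ) ^ (n - j) = -(-1) ^ (n - (j + 1)) := by
        rw [show n - j = n - (j + 1) + 1 by omega, pow_succ, mul_neg_one]
      rw [cg_succ_succ (by omega), eq_sub_of_add_eq' pascal.symm, h_left, h_below, hsign]
      ring

end duality

theorem stmt_6 (m n k i j : ℕ) (hkm : k ≤ m) (hkn : k ≤ n) (him : i ≤ m) (hjn : j ≤ n)
    (hk : k ≤ i + j) (hub : i + j ≤ m + n - k) :
    cg (m + n - 2*k) n (n - k) ((m + n - 2*k) - (i + j - k)) j
      = (-1:ℤ)^(n - j) * cg m n k i j :=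
  cg_dual hkm hkn (by omega) him hjn hk (by omega)
end
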